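/- Let M be a 5-manifold with an SU(2)-structure given by almost contact metric structures (φᵢ, ξ, η, g), i = 1,2,3, with φᵢφⱼ = φₖ = −φⱼφᵢ for even permutations (i,j,k) of (1,2,3), and let ωᵢ(X,Y) = g(φᵢX, Y). Then for any even permutation (i,j,k) of (1,2,3) and all vector fields X, Y, Z: g(N_{φᵢ}(X,Y), φⱼZ) = −dωⱼ(X,Y,Z) + dωⱼ(φᵢX, φᵢY, Z) + dωₖ(φᵢX, Y, Z) + dωₖ(X, φᵢY, Z), where N_{φᵢ} = [φᵢ, φᵢ] + dη ⊗ ξ is the tensor field N_{φᵢ}(X,Y) = φᵢ²[X,Y] + [φᵢX, φᵢY] − φᵢ[φᵢX, Y] − φᵢ[X, φᵢY] + dη(X,Y)ξ. -/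

import Mathlib

/-!
An algebraic model of the differential calculus on a (parallelizable) smooth
manifold: `M` is the type of points, `V` is the model for the tangent spaces,
smooth functions are modelled by maps `M → ℝ` and vector fields by maps
`M → V`.  The data consists of the directional derivative `D` of functions,
the Lie bracket `lie` of vector fields, a Riemannian metric `g` and its
Levi-Civita connection `nabla` (characterized, as usual, by being the unique
metric torsion-free connection).
-/

noncomputable section

structure RGeo (M V : Type) [AddCommGroup V] [Module ℝ V] : Type where
  D : (M → V) → (M → ℝ) → (M → ℝ)
  lie : (M → V) → (M → V) → (M → V)
  g : M → V →ₗ[ℝ] V →ₗ[ℝ] ℝ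
  nabla : (M → V) → (M → V) → (M → V)
  g_symm : ∀ x u v, g x u v = g x v u
  g_posdef : ∀ x (v : V), v ≠ 0 → 0 < g x v v
  D_add_fun : ∀ X f₁ f₂, D X (f₁ + f₂) = D X f₁ + D X f₂
  D_mul_fun : ∀ X f₁ f₂, D X (f₁ * f₂) = f₁ * D X f₂ + f₂ * D X f₁
  D_const : ∀ X (c : ℝ), D X (fun _ => c) = 0
  D_add_vf : ∀ X Y f, D (X + Y) f = D X f + D Y f
  D_smul_vf : ∀ (f : M → ℝ) X φ, D (fun x => f x • X x) φ = f * D X φ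
  lie_antisymm : ∀ X Y, lie X Y = -(lie Y X)
  lie_add_left : ∀ X Y Z, lie (X + Y) Z = lie X Z + lie Y Z
  lie_leibniz : ∀ X (f : M → ℝ) Y,
    lie X (fun x => f x • Y x) = fun x => D X f x • Y x + f x • lie X Y x
  D_lie : ∀ X Y f, D (lie X Y) f = D X (D Y f) - D Y (D X f)
  nabla_add_left : ∀ X Y Z, nabla (X + Y) Z = nabla X Z + nabla Y Z
  nabla_smul_left : ∀ (f : M → ℝ) X Y,
    nabla (fun x => f x • X x) Y = fun x => f x • nabla X Y x
  nabla_add_right : ∀ X Y Z, nabla X (Y + Z) = nabla X Y + nabla X Z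
  nabla_leibniz : ∀ X (f : M → ℝ) Y,
    nabla X (fun x => f x • Y x) = fun x => D X f x • Y x + f x • nabla X Y x
  torsion_free : ∀ X Y, (fun x => nabla X Y x - nabla Y X x) = lie X Y
  metric_compat : ∀ X Y Z,
    D X (fun x => g x (Y x) (Z x)) =
      fun x => g x (nabla X Y x) (Z x) + g x (Y x) (nabla X Z x)

namespace RGeo

variable {M V : Type} [AddCommGroup V] [Module ℝ V]

/-- The metric evaluated on two vector fields. -/
def gf (Γ : RGeo M V) (X Y : M → V) : M → ℝ := fun x => Γ.g x (X x) (Y x)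

/-- Application of a `(1,1)`-tensor field to a vector field. -/
def tapp (A : M → V →ₗ[ℝ] V) (X : M → V) : M → V := fun x => A x (X x)

/-- The covariant derivative `(∇_X A) Y` of a `(1,1)`-tensor field `A`. -/
def covDer (Γ : RGeo M V) (A : M → V →ₗ[ℝ] V) (X Y : M → V) : M → V :=
  fun x => Γ.nabla X (tapp A Y) x - A x (Γ.nabla X Y x)

/-- The constant vector field with value `v`. -/
def cst (M : Type) {V : Type} [AddCommGroup V] [Module ℝ V] (v : V) : M → V := fun _ => v

/-- The Riemann curvature operator `R(X,Y)Z`. -/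
def curv (Γ : RGeo M V) (X Y Z : M → V) : M → V :=
  fun x => Γ.nabla X (Γ.nabla Y Z) x - Γ.nabla Y (Γ.nabla X Z) x - Γ.nabla (Γ.lie X Y) Z x

/-- A family of vectors is orthonormal at the point `x`. -/
def OrthonormalAt (Γ : RGeo M V) (x : M) {n : ℕ} (e : Fin n → V) : Prop :=
  ∀ i j, Γ.g x (e i) (e j) = if i = j then (1 : ℝ) else 0

/-- The Ricci tensor at `x`, computed with respect to a frame orthonormal at `x`. -/
def ricciAt (Γ : RGeo M V) (x : M) {n : ℕ} (e : Fin n → V) (u v : V) : ℝ :=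
  ∑ i, Γ.g x (curv Γ (cst M (e i)) (cst M u) (cst M v) x) (e i)

/-- The scalar curvature at `x`, computed with respect to a frame orthonormal at `x`. -/
def scalarAt (Γ : RGeo M V) (x : M) {n : ℕ} (e : Fin n → V) : ℝ :=
  ∑ i, ∑ j, Γ.g x (curv Γ (cst M (e i)) (cst M (e j)) (cst M (e j)) x) (e i)

/-- Exterior derivative of a 1-form (given by its values on vector fields). -/
def dOne (Γ : RGeo M V) (a : (M → V) → M → ℝ) (X Y : M → V) : M → ℝ :=
  Γ.D X (a Y) - Γ.D Y (a X) - a (Γ.lie X Y)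

/-- Exterior derivative of a 2-form (given by its values on vector fields). -/
def dTwo (Γ : RGeo M V) (ω : (M → V) → (M → V) → M → ℝ) (X Y Z : M → V) : M → ℝ :=
  Γ.D X (ω Y Z) - Γ.D Y (ω X Z) + Γ.D Z (ω X Y)
    - ω (Γ.lie X Y) Z + ω (Γ.lie X Z) Y - ω (Γ.lie Y Z) X

/-- Exterior derivative of a 3-form (given by its values on vector fields). -/
def dThree (Γ : RGeo M V) (c : (M → V) → (M → V) → (M → V) → M → ℝ)
    (X Y Z W : M → V) : M → ℝ :=
  Γ.D X (c Y Z W) - Γ.D Y (c X Z W) + Γ.D Z (c X Y W) - Γ.D W (c X Y Z)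
    - c (Γ.lie X Y) Z W + c (Γ.lie X Z) Y W - c (Γ.lie X W) Y Z
    - c (Γ.lie Y Z) X W + c (Γ.lie Y W) X Z - c (Γ.lie Z W) X Y

/-- Wedge product of a 1-form and a 2-form, on vector fields. -/
def w12 (a : (M → V) → M → ℝ) (b : (M → V) → (M → V) → M → ℝ)
    (X Y Z : M → V) : M → ℝ :=
  a X * b Y Z - a Y * b X Z + a Z * b X Y

/-- Wedge product of two 2-forms, on vector fields. -/
def w22 (b c : (M → V) → (M → V) → M → ℝ) (X Y Z W : M → V) : M → ℝ :=
  b X Y * c Z W - b X Z * c Y W + b X W * c Y Z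
    + b Y Z * c X W - b Y W * c X Z + b Z W * c X Y

/-- An almost contact metric structure `(φ, ξ, η, g)`. -/
structure ACMS (Γ : RGeo M V) : Type where
  phi : M → V →ₗ[ℝ] V
  xi : M → V
  eta : M → V →ₗ[ℝ] ℝ
  phi_sq : ∀ x (v : V), phi x (phi x v) = -v + eta x v • xi x
  eta_xi : ∀ x, eta x (xi x) = 1
  metric_phi : ∀ x (u v : V),
    Γ.g x (phi x u) (phi x v) = Γ.g x u v - eta x u * eta x v

variable {Γ : RGeo M V}

/-- `η` evaluated on vector fields. -/
def ACMS.etaf (S : ACMS Γ) : (M → V) → M → ℝ := fun X x => S.eta x (X x)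

/-- `φ` applied to a vector field. -/
def ACMS.phif (S : ACMS Γ) : (M → V) → M → V := fun X x => S.phi x (X x)

/-- The fundamental 2-form `Φ(X,Y) = g(φX, Y)`, on vector fields. -/
def ACMS.omegaf (S : ACMS Γ) : (M → V) → (M → V) → M → ℝ :=
  fun X Y x => Γ.g x (S.phi x (X x)) (Y x)

/-- Nearly Sasakian structure: `(∇_X φ)Y + (∇_Y φ)X = 2g(X,Y)ξ − η(X)Y − η(Y)X`. -/
def ACMS.IsNearlySasakian (S : ACMS Γ) : Prop :=
  ∀ X Y : M → V, ∀ x,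
    covDer Γ S.phi X Y x + covDer Γ S.phi Y X x
      = (2 * Γ.g x (X x) (Y x)) • S.xi x - S.eta x (X x) • Y x - S.eta x (Y x) • X x

/-- Sasakian structure: `(∇_X φ)Y = g(X,Y)ξ − η(Y)X`. -/
def ACMS.IsSasakian (S : ACMS Γ) : Prop :=
  ∀ X Y : M → V, ∀ x,
    covDer Γ S.phi X Y x = Γ.g x (X x) (Y x) • S.xi x - S.eta x (Y x) • X x

/-- Nearly cosymplectic structure: `(∇_X φ)Y + (∇_Y φ)X = 0`. -/
def ACMS.IsNearlyCosymplectic (S : ACMS Γ) : Prop :=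
  ∀ X Y : M → V, ∀ x, covDer Γ S.phi X Y x + covDer Γ S.phi Y X x = 0

/-- coKähler structure: `∇φ = 0`. -/
def ACMS.IsCoKaehler (S : ACMS Γ) : Prop :=
  ∀ X Y : M → V, ∀ x, covDer Γ S.phi X Y x = 0

/-- Nearly α-Sasakian structure. -/
def ACMS.IsNearlyAlphaSasakian (S : ACMS Γ) (α : ℝ) : Prop :=
  ∀ X Y : M → V, ∀ x,
    covDer Γ S.phi X Y x + covDer Γ S.phi Y X x
      = α • ((2 * Γ.g x (X x) (Y x)) • S.xi x - S.eta x (X x) • Y x - S.eta x (Y x) • X x)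

/-- `h` is the tensor of the nearly Sasakian structure `S`: `∇_X ξ = −φX + hX`. -/
def ACMS.IsNSTensor (S : ACMS Γ) (h : M → V →ₗ[ℝ] V) : Prop :=
  ∀ X : M → V, ∀ x, Γ.nabla X S.xi x = -(S.phi x (X x)) + h x (X x)

/-- `h` is the tensor of the nearly cosymplectic structure `S`: `∇_X ξ = hX`. -/
def ACMS.IsNCTensor (S : ACMS Γ) (h : M → V →ₗ[ℝ] V) : Prop :=
  ∀ X : M → V, ∀ x, Γ.nabla X S.xi x = h x (X x)

/-- A vector field is a section of a distribution. -/
def Sect (Dst : M → Submodule ℝ V) (X : M → V) : Prop := ∀ x, X x ∈ Dst x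

/-- A distribution is integrable (involutive). -/
def IsIntegrable (Γ : RGeo M V) (Dst : M → Submodule ℝ V) : Prop :=
  ∀ X Y, Sect Dst X → Sect Dst Y → Sect Dst (Γ.lie X Y)

/-- A distribution defines a totally geodesic foliation: it is closed under
covariant differentiation along its own sections. -/
def IsTotallyGeodesic (Γ : RGeo M V) (Dst : M → Submodule ℝ V) : Prop :=
  ∀ X Y, Sect Dst X → Sect Dst Y → Sect Dst (Γ.nabla X Y)

/-- The eigendistribution of `h²` for the eigenvalue `μ`. -/
def eigD (h : M → V →ₗ[ℝ] V) (μ : ℝ) : M → Submodule ℝ V :=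
  fun x => Module.End.eigenspace (h x ∘ₗ h x) μ

/-- `(i,j,k)` is an even permutation of `(1,2,3)` (here of `(0,1,2)`). -/
def EvenPerm (i j k : Fin 3) : Prop :=
  (i, j, k) = (0, 1, 2) ∨ (i, j, k) = (1, 2, 0) ∨ (i, j, k) = (2, 0, 1)

/-- An `SU(2)`-structure on a 5-manifold, described by three almost contact
metric structures sharing `ξ`, `η`, `g` and satisfying the quaternionic
relations `φᵢφⱼ = φₖ = −φⱼφᵢ` for even permutations `(i,j,k)`. -/
structure SU2Triple (Γ : RGeo M V) : Type where
  S : Fin 3 → ACMS Γ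
  same_xi : ∀ i j, (S i).xi = (S j).xi
  same_eta : ∀ i j, (S i).eta = (S j).eta
  quat : ∀ i j k, EvenPerm i j k → ∀ x (v : V),
    (S i).phi x ((S j).phi x v) = (S k).phi x v ∧
    (S j).phi x ((S i).phi x v) = -((S k).phi x v)

/-- The tensor field `N_φ = [φ,φ] + dη ⊗ ξ`. -/
def nijenhuis (Γ : RGeo M V) (A : M → V →ₗ[ℝ] V) (eta : M → V →ₗ[ℝ] ℝ) (xi : M → V)
    (X Y : M → V) : M → V :=
  fun x => A x (A x (Γ.lie X Y x)) + Γ.lie (tapp A X) (tapp A Y) x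
    - A x (Γ.lie (tapp A X) Y x) - A x (Γ.lie X (tapp A Y) x)
    + dOne Γ (fun Z y => eta y (Z y)) X Y x • xi x

/-- Pointwise wedge product of two 2-forms on `V`, evaluated on four vectors. -/
def wedge22At (b c : V →ₗ[ℝ] V →ₗ[ℝ] ℝ) (p q r s : V) : ℝ :=
  b p q * c r s - b p r * c q s + b p s * c q r
    + b q r * c p s - b q s * c p r + b r s * c p q

/-- Pointwise wedge product of a 4-form and a 1-form on `V`, on five vectors. -/
def wedge41At (v4 : V → V → V → V → ℝ) (a : V →ₗ[ℝ] ℝ) (p q r s t : V) : ℝ :=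
  a p * v4 q r s t - a q * v4 p r s t + a r * v4 p q s t
    - a s * v4 p q r t + a t * v4 p q r s

end RGeo

/-- The data `(η, ω₁, ω₂, ω₃)` of a candidate `SU(2)`-structure on a 5-manifold:
a 1-form and three 2-forms (given pointwise). -/
structure SU2Forms (M V : Type) [AddCommGroup V] [Module ℝ V] : Type where
  eta : M → V →ₗ[ℝ] ℝ
  omega : Fin 3 → M → V →ₗ[ℝ] V →ₗ[ℝ] ℝ
  omega_alt : ∀ i x v, omega i x v v = 0

namespace SU2Forms

variable {M V : Type} [AddCommGroup V] [Module ℝ V]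

/-- `(η, ω₁, ω₂, ω₃)` is an `SU(2)`-structure: `ωᵢ ∧ ωⱼ = δᵢⱼ v` for a 4-form
`v` with `v ∧ η ≠ 0`, and `X⌟ω₁ = Y⌟ω₂` implies `ω₃(X,Y) ≥ 0`. -/
def IsSU2 (F : SU2Forms M V) : Prop :=
  (∃ v4 : M → V → V → V → V → ℝ,
    (∀ i j x p q r s, RGeo.wedge22At (F.omega i x) (F.omega j x) p q r s
        = (if i = j then (1 : ℝ) else 0) * v4 x p q r s) ∧
    (∀ x, ∃ p q r s t, RGeo.wedge41At (v4 x) (F.eta x) p q r s t ≠ 0)) ∧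
  (∀ x (u w : V), (∀ z, F.omega 0 x u z = F.omega 1 x w z) → 0 ≤ F.omega 2 x u w)

/-- `η` evaluated on vector fields. -/
def etaf (F : SU2Forms M V) : (M → V) → M → ℝ := fun X x => F.eta x (X x)

/-- `ωᵢ` evaluated on vector fields. -/
def omegaf (F : SU2Forms M V) (i : Fin 3) : (M → V) → (M → V) → M → ℝ :=
  fun X Y x => F.omega i x (X x) (Y x)

end SU2Forms

namespace RGeo

variable {M V : Type} [AddCommGroup V] [Module ℝ V]

/-- A linear connection on `(M, V, Γ)`. -/
structure ConnOf (Γ : RGeo M V) : Type where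
  nb : (M → V) → (M → V) → (M → V)
  nb_add_left : ∀ X Y Z, nb (X + Y) Z = nb X Z + nb Y Z
  nb_smul_left : ∀ (f : M → ℝ) X Y, nb (fun x => f x • X x) Y = fun x => f x • nb X Y x
  nb_add_right : ∀ X Y Z, nb X (Y + Z) = nb X Y + nb X Z
  nb_leibniz : ∀ X (f : M → ℝ) Y,
    nb X (fun x => f x • Y x) = fun x => Γ.D X f x • Y x + f x • nb X Y x

/-- The torsion of a linear connection. -/
def ConnOf.tors {Γ : RGeo M V} (C : ConnOf Γ) (X Y : M → V) : M → V :=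
  fun x => C.nb X Y x - C.nb Y X x - Γ.lie X Y x

/-- The connection parallelizes all the structure tensors `g`, `ξ`, `φ`, `η`. -/
def ConnOf.Parallelizes {Γ : RGeo M V} (C : ConnOf Γ) (S : ACMS Γ) : Prop :=
  (∀ X Y Z, Γ.D X (Γ.gf Y Z)
      = fun x => Γ.g x (C.nb X Y x) (Z x) + Γ.g x (Y x) (C.nb X Z x)) ∧
  (∀ X x, C.nb X S.xi x = 0) ∧
  (∀ X Y x, C.nb X (tapp S.phi Y) x = S.phi x (C.nb X Y x)) ∧
  (∀ X Y, Γ.D X (S.etaf Y) = fun x => S.eta x (C.nb X Y x))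

end RGeo

/-!
Everything is expressed through the covariant derivatives `∇φ` of the Levi-Civita connection:
torsion-freeness turns `N_φ` into a combination of `(∇_{φX} φ)Y`, `φ(∇_X φ)Y`, …, and metric
compatibility turns `dω` into the alternation of `g((∇_X φ)Y, Z)`.  Differentiating the
quaternionic relations `φⱼ = φₖφᵢ` and `φₖ = −φⱼφᵢ` expresses `∇φⱼ` and `∇φₖ` through `∇φᵢ`,
and after that the formula is a linear combination of these relations and of the
skew-symmetry of the `φ`'s with respect to `g`.
-/

namespace RGeo

variable {M V : Type} [AddCommGroup V] [Module ℝ V] {Γ : RGeo M V}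

@[simp]
theorem tapp_apply (A : M → V →ₗ[ℝ] V) (W : M → V) (x : M) : tapp A W x = A x (W x) := rfl

namespace ACMS

variable (S : ACMS Γ) (x : M)

theorem phi_xi : S.phi x (S.xi x) = 0 := by
  set w := S.phi x (S.xi x)
  have hφw : S.phi x w = 0 := by rw [S.phi_sq, S.eta_xi, one_smul, neg_add_cancel]
  have hw : w = S.eta x w • S.xi x := by
    have h := S.phi_sq x w
    rw [hφw, map_zero] at h
    linear_combination (norm := module) h
  have hη : S.eta x w * S.eta x w = 0 := by
    have h := congrArg (fun v => S.eta x (S.phi x v)) hw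
    simp only [map_smul, hφw, map_zero, smul_eq_mul] at h
    exact h.symm
  rw [hw, mul_self_eq_zero.mp hη, zero_smul]

theorem eta_phi (v : V) : S.eta x (S.phi x v) = 0 := by
  have h := S.phi_sq x (S.phi x v)
  rw [S.phi_sq x v, map_add, map_neg, map_smul, S.phi_xi, smul_zero, add_zero,
    left_eq_add] at h
  simpa [S.eta_xi] using congrArg (S.eta x) h

theorem g_xi (v : V) : Γ.g x (S.xi x) v = S.eta x v := by
  have h := S.metric_phi x (S.xi x) v
  simp only [S.phi_xi, map_zero, LinearMap.zero_apply, S.eta_xi, one_mul] at h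
  linarith

theorem g_phi_left (u v : V) : Γ.g x (S.phi x u) v = -Γ.g x u (S.phi x v) := by
  have h := S.metric_phi x (S.phi x u) v
  rw [S.eta_phi, zero_mul, sub_zero, S.phi_sq] at h
  simp only [map_add, map_neg, map_smul, LinearMap.add_apply, LinearMap.neg_apply,
    LinearMap.smul_apply, smul_eq_mul, S.g_xi, S.eta_phi, mul_zero, add_zero] at h
  linarith

theorem g_phi_right (u v : V) : Γ.g x u (S.phi x v) = -Γ.g x (S.phi x u) v := by
  rw [S.g_phi_left, neg_neg]

end ACMS

theorem nabla_neg_right (U W : M → V) : Γ.nabla U (-W) = -Γ.nabla U W :=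
  (AddMonoidHom.mk' (Γ.nabla U) (Γ.nabla_add_right U)).map_neg W

theorem lie_eq_nabla_sub (X Y : M → V) (x : M) :
    Γ.lie X Y x = Γ.nabla X Y x - Γ.nabla Y X x :=
  (congrFun (Γ.torsion_free X Y) x).symm

section TensorFields

variable {A B C : M → V →ₗ[ℝ] V}

theorem covDer_of_comp (hC : ∀ y v, C y v = A y (B y v)) (U W : M → V) (x : M) :
    covDer Γ C U W x = covDer Γ A U (tapp B W) x + A x (covDer Γ B U W x) := by
  have e : tapp C W = tapp A (tapp B W) := funext fun y => hC y (W y)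
  simp only [covDer, e, hC, map_sub]
  abel

theorem covDer_of_neg_comp (hC : ∀ y v, C y v = -A y (B y v)) (U W : M → V) (x : M) :
    covDer Γ C U W x = -(covDer Γ A U (tapp B W) x + A x (covDer Γ B U W x)) := by
  have e : tapp C W = -tapp A (tapp B W) := funext fun y => hC y (W y)
  simp only [covDer, e, nabla_neg_right, hC, map_sub, Pi.neg_apply]
  abel

theorem nijenhuis_eq_covDer (eta : M → V →ₗ[ℝ] ℝ) (xi X Y : M → V) (x : M) :
    nijenhuis Γ A eta xi X Y x
      = covDer Γ A (tapp A X) Y x - covDer Γ A (tapp A Y) X x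
        + A x (covDer Γ A Y X x) - A x (covDer Γ A X Y x)
        + dOne Γ (fun Z y => eta y (Z y)) X Y x • xi x := by
  simp only [nijenhuis, covDer, lie_eq_nabla_sub, map_sub]
  abel

end TensorFields

theorem ACMS.D_omegaf (S : ACMS Γ) (U P Q : M → V) (x : M) :
    Γ.D U (S.omegaf P Q) x
      = Γ.g x (covDer Γ S.phi U P x) (Q x) + S.omegaf (Γ.nabla U P) Q x
        + S.omegaf P (Γ.nabla U Q) x := by
  rw [show S.omegaf P Q = fun y => Γ.g y (tapp S.phi P y) (Q y) from rfl, Γ.metric_compat]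
  simp only [covDer, omegaf, map_sub, LinearMap.sub_apply, tapp_apply]
  ring

theorem ACMS.dTwo_omegaf (S : ACMS Γ) (X Y Z : M → V) (x : M) :
    dTwo Γ S.omegaf X Y Z x
      = Γ.g x (covDer Γ S.phi X Y x) (Z x) - Γ.g x (covDer Γ S.phi Y X x) (Z x)
        + Γ.g x (covDer Γ S.phi Z X x) (Y x) := by
  have skew : ∀ u v : V, Γ.g x (S.phi x u) v = -Γ.g x (S.phi x v) u := fun u v => by
    rw [S.g_phi_left, Γ.g_symm x u]
  simp only [dTwo, Pi.add_apply, Pi.sub_apply, S.D_omegaf, omegaf, lie_eq_nabla_sub, map_sub,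
    LinearMap.sub_apply]
  rw [skew (Y x) (Γ.nabla X Z x), skew (X x) (Γ.nabla Y Z x), skew (X x) (Γ.nabla Z Y x)]
  ring

theorem EvenPerm.rotate {i j k : Fin 3} (h : EvenPerm i j k) : EvenPerm j k i := by
  rcases h with h | h | h <;> simp_all [EvenPerm, Prod.ext_iff]

section Quaternionic

variable {A B C : ACMS Γ} (U P Q : M → V) (x : M)

theorem covDer_phiB_eq (hCA : ∀ y v, C.phi y (A.phi y v) = B.phi y v) :
    covDer Γ B.phi U P x
      = covDer Γ C.phi U (tapp A.phi P) x + C.phi x (covDer Γ A.phi U P x) :=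
  covDer_of_comp (fun y v => (hCA y v).symm) U P x

theorem covDer_phiC_eq (hBA : ∀ y v, B.phi y (A.phi y v) = -C.phi y v) :
    covDer Γ C.phi U P x
      = -(covDer Γ B.phi U (tapp A.phi P) x + B.phi x (covDer Γ A.phi U P x)) :=
  covDer_of_neg_comp (fun y v => by rw [hBA, neg_neg]) U P x

theorem g_covDer_phiC (hCA : ∀ y v, C.phi y (A.phi y v) = B.phi y v) :
    Γ.g x (covDer Γ A.phi U P x) (C.phi x (Q x))
      = -Γ.g x (covDer Γ B.phi U P x) (Q x)
        + Γ.g x (covDer Γ C.phi U (tapp A.phi P) x) (Q x) := by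
  rw [C.g_phi_right, covDer_phiB_eq U P x hCA, map_add, LinearMap.add_apply]
  ring

theorem g_covDer_phiB (hBA : ∀ y v, B.phi y (A.phi y v) = -C.phi y v) :
    Γ.g x (covDer Γ A.phi U P x) (B.phi x (Q x))
      = Γ.g x (covDer Γ B.phi U (tapp A.phi P) x) (Q x)
        + Γ.g x (covDer Γ C.phi U P x) (Q x) := by
  rw [B.g_phi_right, covDer_phiC_eq U P x hBA]
  simp only [map_neg, map_add, LinearMap.neg_apply, LinearMap.add_apply]
  ring

theorem g_covDer_phiB_phi_phi (hCA : ∀ y v, C.phi y (A.phi y v) = B.phi y v)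
    (hBA : ∀ y v, B.phi y (A.phi y v) = -C.phi y v) :
    Γ.g x (covDer Γ B.phi U (tapp A.phi P) x) (A.phi x (Q x))
      + Γ.g x (covDer Γ C.phi U (tapp A.phi P) x) (Q x)
      + Γ.g x (covDer Γ C.phi U P x) (A.phi x (Q x))
      = Γ.g x (covDer Γ B.phi U P x) (Q x) := by
  have hB : covDer Γ B.phi U (tapp A.phi P) x
      = -covDer Γ C.phi U P x - B.phi x (covDer Γ A.phi U P x) := by
    rw [covDer_phiC_eq U P x hBA]; abel
  have hC : covDer Γ C.phi U (tapp A.phi P) x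
      = covDer Γ B.phi U P x - C.phi x (covDer Γ A.phi U P x) := by
    rw [covDer_phiB_eq U P x hCA]; abel
  rw [hB, hC]
  simp only [map_sub, map_neg, LinearMap.sub_apply, LinearMap.neg_apply]
  rw [B.g_phi_left, hBA, C.g_phi_left, map_neg]
  ring

theorem g_phi_phiB (hBA : ∀ y v, B.phi y (A.phi y v) = -C.phi y v) (u v : V) :
    Γ.g x (A.phi x u) (B.phi x v) = -Γ.g x u (C.phi x v) := by
  rw [B.g_phi_right, hBA, map_neg, LinearMap.neg_apply, neg_neg, C.g_phi_left]

theorem g_nijenhuis_phiB (hCA : ∀ y v, C.phi y (A.phi y v) = B.phi y v)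
    (hBA : ∀ y v, B.phi y (A.phi y v) = -C.phi y v) (hξ : A.xi = B.xi) (X Y Z : M → V) :
    Γ.g x (nijenhuis Γ A.phi A.eta A.xi X Y x) (B.phi x (Z x))
      = -dTwo Γ B.omegaf X Y Z x
        + dTwo Γ B.omegaf (tapp A.phi X) (tapp A.phi Y) Z x
        + dTwo Γ C.omegaf (tapp A.phi X) Y Z x
        + dTwo Γ C.omegaf X (tapp A.phi Y) Z x := by
  have hξZ : Γ.g x (A.xi x) (B.phi x (Z x)) = 0 := by rw [hξ, B.g_xi, B.eta_phi]
  rw [nijenhuis_eq_covDer, B.dTwo_omegaf, B.dTwo_omegaf, C.dTwo_omegaf, C.dTwo_omegaf]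
  simp only [map_add, map_sub, map_smul, LinearMap.add_apply, LinearMap.sub_apply,
    LinearMap.smul_apply, smul_eq_mul, hξZ, mul_zero, add_zero, g_phi_phiB x hBA, tapp_apply]
  linear_combination
    g_covDer_phiB (tapp A.phi X) Y Z x hBA - g_covDer_phiB (tapp A.phi Y) X Z x hBA
    + g_covDer_phiC X Y Z x hCA - g_covDer_phiC Y X Z x hCA
    - g_covDer_phiB_phi_phi Z X Y x hCA hBA

end Quaternionic

end RGeo

open RGeo in
theorem nijenhuis_formula_SU2_general {M V : Type} [AddCommGroup V] [Module ℝ V]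
    (Γ : RGeo M V) (T : SU2Triple Γ)
    (i j k : Fin 3) (hperm : EvenPerm i j k)
    (X Y Z : M → V) (x : M) :
    Γ.g x (nijenhuis Γ (T.S i).phi (T.S i).eta (T.S i).xi X Y x) ((T.S j).phi x (Z x))
      = -(dTwo Γ (T.S j).omegaf X Y Z x)
        + dTwo Γ (T.S j).omegaf (tapp (T.S i).phi X) (tapp (T.S i).phi Y) Z x
        + dTwo Γ (T.S k).omegaf (tapp (T.S i).phi X) Y Z x
        + dTwo Γ (T.S k).omegaf X (tapp (T.S i).phi Y) Z x :=
  g_nijenhuis_phiB x (fun y v => (T.quat k i j hperm.rotate.rotate y v).1)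
    (fun y v => (T.quat i j k hperm y v).2) (T.same_xi i j) X Y Z

open RGeo in
/-- Lemma.  On a 5-manifold with an `SU(2)`-structure, for any
even permutation `(i,j,k)`:
`g(N_{φᵢ}(X,Y), φⱼZ) = −dωⱼ(X,Y,Z) + dωⱼ(φᵢX,φᵢY,Z) + dωₖ(φᵢX,Y,Z) + dωₖ(X,φᵢY,Z)`. -/
theorem nijenhuis_formula_SU2 {M V : Type} [AddCommGroup V] [Module ℝ V]
    [FiniteDimensional ℝ V] (hdim : Module.finrank ℝ V = 5)
    (Γ : RGeo M V) (T : SU2Triple Γ)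
    (i j k : Fin 3) (hperm : EvenPerm i j k)
    (X Y Z : M → V) (x : M) :
    Γ.g x (nijenhuis Γ (T.S i).phi (T.S i).eta (T.S i).xi X Y x) ((T.S j).phi x (Z x))
      = -(dTwo Γ (T.S j).omegaf X Y Z x)
        + dTwo Γ (T.S j).omegaf (tapp (T.S i).phi X) (tapp (T.S i).phi Y) Z x
        + dTwo Γ (T.S k).omegaf (tapp (T.S i).phi X) Y Z x
        + dTwo Γ (T.S k).omegaf X (tapp (T.S i).phi Y) Z x :=
  nijenhuis_formula_SU2_general Γ T i j k hperm X Y Z x
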